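/- arXiv:1309.7723 — 2 statements merged into one kernel-verified Lean document; each statement's English description precedes it below -/
import Mathlib

section
/- For any initial probability row vector X₀ ∈ ℝ⁴ (nonnegative entries summing to 1) and any n ≥ 2, X₀·P₂ⁿ = ((1-p)², p(1-p), p(1-p), p²). -/
open Matrix

theorem P2_pow_mul_initial (p : ℝ) (hp : p ∈ Set.Ico (0:ℝ) 1)
    (P₂ : Matrix (Fin 4) (Fin 4) ℝ)
    (hP : P₂ = !![1-p, p, 0, 0; 0, 0, 1-p, p; 1-p, p, 0, 0; 0, 0, 1-p, p])
    (X₀ : Fin 4 → ℝ) (hX₀nonneg : ∀ i, 0 ≤ X₀ i) (hX₀sum : ∑ i, X₀ i = 1)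
    (n : ℕ) (hn : 2 ≤ n) :
    X₀ ᵥ* (P₂ ^ n) = ![(1-p)^2, p*(1-p), p*(1-p), p^2] := by
  have hsq : P₂ ^ 2 = !![(1-p)^2, p*(1-p), p*(1-p), p^2;
      (1-p)^2, p*(1-p), p*(1-p), p^2;
      (1-p)^2, p*(1-p), p*(1-p), p^2;
      (1-p)^2, p*(1-p), p*(1-p), p^2] := by
    rw [pow_two, hP]
    ext i j
    fin_cases i <;> fin_cases j <;>
      simp [Matrix.mul_apply, Fin.sum_univ_four, Matrix.vecHead, Matrix.vecTail] <;> ring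
  have hstep : P₂ ^ 2 * P₂ = P₂ ^ 2 := by
    rw [hsq, hP]
    ext i j
    fin_cases i <;> fin_cases j <;>
      simp [Matrix.mul_apply, Fin.sum_univ_four, Matrix.vecHead, Matrix.vecTail] <;> ring
  have hpow : P₂ ^ n = P₂ ^ 2 := by
    obtain ⟨k, rfl⟩ := Nat.exists_eq_add_of_le hn
    induction k with
    | zero => rfl
    | succ m ih =>
      have h2 : (2 + (m + 1)) = (2 + m) + 1 := by ring
      rw [h2, pow_succ, ih (by omega), hstep]
  rw [hpow, hsq]
  have hsum : X₀ 0 + X₀ 1 + X₀ 2 + X₀ 3 = 1 := by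
    rw [← Fin.sum_univ_four]; exact hX₀sum
  ext j
  fin_cases j <;>
    simp [Matrix.vecMul, dotProduct, Fin.sum_univ_four, Matrix.vecHead, Matrix.vecTail] <;>
    nlinarith [hsum]
end

section
/- For the absorbing chain matrix Q (3×3 with rows (1-p, p, 0), (0, 0, 1-p), (1-p, p, 0)), the matrix I - Q is invertible for p ∈ (0,1] and (I-Q)⁻¹·𝟙 = ((1+p)/p², 1/p², (1+p)/p²)ᵀ, where 𝟙 = (1,1,1)ᵀ. -/
open Matrix

theorem one_sub_Q_inv_mulVec_ones (p : ℝ) (hp : p ∈ Set.Ioc (0:ℝ) 1)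
    (Q : Matrix (Fin 3) (Fin 3) ℝ)
    (hQ : Q = !![1-p, p, 0; 0, 0, 1-p; 1-p, p, 0]) :
    IsUnit (1 - Q) ∧
      (1 - Q)⁻¹.mulVec (fun _ => 1) = ![(1+p)/p^2, 1/p^2, (1+p)/p^2] := by
  obtain ⟨hp0, hp1⟩ := hp
  have hp0' : p ≠ 0 := ne_of_gt hp0
  have hA : (1 : Matrix (Fin 3) (Fin 3) ℝ) - Q = !![p, -p, 0; 0, 1, p-1; p-1, -p, 1] := by
    subst hQ
    ext i j
    fin_cases i <;> fin_cases j <;>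
      simp [Matrix.one_apply] <;> ring
  have hdet : ((1 : Matrix (Fin 3) (Fin 3) ℝ) - Q).det = p^2 := by
    rw [hA]
    simp [Matrix.det_fin_three]
    ring
  have hunit : IsUnit (1 - Q) := by
    rw [Matrix.isUnit_iff_isUnit_det, hdet]
    exact (isUnit_iff_ne_zero.mpr (pow_ne_zero 2 hp0'))
  refine ⟨hunit, ?_⟩
  have key : ((1 : Matrix (Fin 3) (Fin 3) ℝ) - Q).mulVec ![(1+p)/p^2, 1/p^2, (1+p)/p^2]
      = (fun _ => 1) := by
    rw [hA]
    ext i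
    fin_cases i <;>
      · simp [Matrix.mulVec, dotProduct, Fin.sum_univ_three]
        field_simp
        ring
  calc (1 - Q)⁻¹.mulVec (fun _ => 1)
      = (1 - Q)⁻¹.mulVec ((1 - Q).mulVec ![(1+p)/p^2, 1/p^2, (1+p)/p^2]) := by rw [key]
    _ = ((1 - Q)⁻¹ * (1 - Q)).mulVec ![(1+p)/p^2, 1/p^2, (1+p)/p^2] := by
        rw [Matrix.mulVec_mulVec]
    _ = ![(1+p)/p^2, 1/p^2, (1+p)/p^2] := by
        rw [Matrix.nonsing_inv_mul _ (Matrix.isUnit_iff_isUnit_det _ |>.mp hunit), Matrix.one_mulVec]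
end
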